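/- Given continuous functions g_1,...,g_m : ℝ → ℝ and a real random variable X such that E[g_k(X)] exists for each k, there exist at most m+1 points z_1,...,z_{m+1} ∈ ℝ and nonnegative weights θ_1,...,θ_{m+1} summing to 1 such that E[g_k(X)] = Σ_{i=1}^{m+1} θ_i g_k(z_i) for every k = 1,...,m. -/

import Mathlib

/-!
The mean `b = E[G(X)]` of `G = (g₁, …, gₘ)` lies in the convex hull of `G(ℝ)`. Otherwise, in finite
dimension, some nonzero functional `L` is maximised over that hull at `b` (a supporting
hyperplane, or a hyperplane containing the whole hull if it has empty interior). Since
`E[L(G(X))] = L(b)`, `G(X)` then lies almost surely in the hyperplane `L = L(b)`, and induction on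
the dimension gives a contradiction. Carathéodory's theorem then writes `b` as a convex combination
of `m + 1` points of the curve.
-/

open MeasureTheory Module

section Caratheodory

variable {E : Type*} [AddCommGroup E] [Module ℝ E] [FiniteDimensional ℝ E]

theorem exists_convex_combination_fin_of_mem_convexHull {s : Set E} {x : E}
    (hx : x ∈ convexHull ℝ s) {n : ℕ} (hn : finrank ℝ E < n) :
    ∃ (p : Fin n → E) (w : Fin n → ℝ), (∀ i, p i ∈ s) ∧ (∀ i, 0 ≤ w i) ∧ ∑ i, w i = 1 ∧
      ∑ i, w i • p i = x := by
  classical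
  obtain ⟨x₀, hx₀⟩ : s.Nonempty := convexHull_nonempty_iff.mp ⟨x, hx⟩
  obtain ⟨ι, _, p, w, hps, hp, hw, hw1, hwp⟩ := eq_pos_convex_span_of_mem_convexHull hx
  obtain ⟨e⟩ : Nonempty (ι ↪ Fin n) := Function.Embedding.nonempty_of_card_le <| by
    simpa using hp.card_le_finrank_succ.trans ((Submodule.finrank_le _).trans_lt hn)
  set w' := Function.extend e w 0
  set p' := Function.extend e p fun _ => x₀
  have hw'e (i : ι) : w' (e i) = w i := e.injective.extend_apply _ _ _
  have hp'e (i : ι) : p' (e i) = p i := e.injective.extend_apply _ _ _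
  have hw'0 (j : Fin n) (hj : j ∉ Set.range e) : w' j = 0 := Function.extend_apply' _ _ _ hj
  refine ⟨p', w', fun j => ?_, fun j => ?_, ?_, ?_⟩
  · by_cases hj : j ∈ Set.range e
    · obtain ⟨i, rfl⟩ := hj
      exact hp'e i ▸ hps ⟨i, rfl⟩
    · simpa [p', Function.extend_apply' _ _ _ hj] using hx₀
  · by_cases hj : j ∈ Set.range e
    · obtain ⟨i, rfl⟩ := hj
      exact (hw'e i).symm ▸ (hw i).le
    · exact (hw'0 j hj).ge
  · rw [← hw1]
    exact (Fintype.sum_of_injective e e.injective w w' hw'0 fun i => (hw'e i).symm).symm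
  · rw [← hwp]
    exact (Fintype.sum_of_injective e e.injective _ _ (fun j hj => by simp [hw'0 j hj])
      fun i => by rw [hw'e, hp'e]).symm

end Caratheodory

section Separation

variable {E : Type*} [NormedAddCommGroup E] [NormedSpace ℝ E] [FiniteDimensional ℝ E]

theorem Convex.exists_ne_zero_forall_eq_of_interior_eq_empty {A : Set E} (hA : Convex ℝ A)
    (hint : interior A = ∅) {x : E} (hx : x ∈ A) :
    ∃ f : StrongDual ℝ E, f ≠ 0 ∧ ∀ a ∈ A, f a = f x := by
  have hspan : affineSpan ℝ A ≠ ⊤ := by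
    rw [Ne, ← hA.interior_nonempty_iff_affineSpan_eq_top, hint]
    exact Set.not_nonempty_empty
  have hdir : (affineSpan ℝ A).direction < ⊤ := by
    rwa [lt_top_iff_ne_top, Ne,
      AffineSubspace.direction_eq_top_iff_of_nonempty ⟨x, subset_affineSpan ℝ A hx⟩]
  obtain ⟨f, hf0, hker⟩ := (affineSpan ℝ A).direction.exists_le_ker_of_lt_top hdir
  refine ⟨LinearMap.toContinuousLinearMap f, fun h => hf0 ?_, fun a ha => ?_⟩
  · exact LinearMap.toContinuousLinearMap.injective (by simpa using h)
  · have hax := hker (AffineSubspace.vsub_mem_direction (subset_affineSpan ℝ A ha)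
      (subset_affineSpan ℝ A hx))
    simpa [sub_eq_zero] using hax

theorem Convex.exists_ne_zero_forall_le_of_notMem_interior {A : Set E} (hA : Convex ℝ A)
    (hne : A.Nonempty) {b : E} (hb : b ∉ interior A) :
    ∃ f : StrongDual ℝ E, f ≠ 0 ∧ ∀ a ∈ A, f a ≤ f b := by
  rcases (interior A).eq_empty_or_nonempty with hint | hint
  · obtain ⟨x, hx⟩ := hne
    obtain ⟨f, hf0, hf⟩ := hA.exists_ne_zero_forall_eq_of_interior_eq_empty hint hx
    rcases le_total (f x) (f b) with h | h
    · exact ⟨f, hf0, fun a ha => (hf a ha).trans_le h⟩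
    · exact ⟨-f, neg_ne_zero.mpr hf0, fun a ha => by simp [hf a ha, h]⟩
  · exact geometric_hahn_banach_of_nonempty_interior_point hA hb hint

end Separation

theorem integral_mem_convexHull {Ω : Type*} [MeasurableSpace Ω] {μ : Measure Ω}
    [IsProbabilityMeasure μ] {E : Type*} [NormedAddCommGroup E] [NormedSpace ℝ E]
    [FiniteDimensional ℝ E] {f : Ω → E} (hf : Integrable f μ) {s : Set E}
    (hfs : ∀ᵐ ω ∂μ, f ω ∈ s) :
    ∫ ω, f ω ∂μ ∈ convexHull ℝ s := by
  induction hn : finrank ℝ E using Nat.strong_induction_on generalizing E with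
  | _ n ih =>
    set b := ∫ ω, f ω ∂μ
    by_contra hb
    have hs : s.Nonempty := hfs.exists.elim fun ω h => ⟨f ω, h⟩
    obtain ⟨L, hL0, hL⟩ := (convex_convexHull ℝ s).exists_ne_zero_forall_le_of_notMem_interior
      hs.convexHull fun h => hb (interior_subset h)
    have hLf : ∀ᵐ ω ∂μ, L (f ω) = L b := by
      have hle : (fun ω => L (f ω)) ≤ᵐ[μ] fun _ => L b :=
        hfs.mono fun ω h => hL _ (subset_convexHull ℝ s h)
      exact (integral_eq_iff_of_ae_le (L.integrable_comp hf) (integrable_const _) hle).mp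
        (by simp [b, L.integral_comp_comm hf])
    obtain ⟨v, hv⟩ : ∃ v, L v = 1 := by
      obtain ⟨u, hu⟩ := DFunLike.ne_iff.mp hL0
      exact ⟨(L u)⁻¹ • u, by simp [inv_mul_cancel₀ hu]⟩
    -- `P` projects onto `ker L` along `v`, and `A` maps `ker L` onto the hyperplane through `b`.
    set K := LinearMap.ker (L : E →ₗ[ℝ] ℝ)
    let P : E →L[ℝ] K := (ContinuousLinearMap.id ℝ E - L.smulRight v).codRestrict K
      fun x => by simp [K, hv]
    have hP (x : E) (hx : x ∈ K) : (P x : E) = x := by simp_all [K, P]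
    have hK : finrank ℝ K < n :=
      hn ▸ Submodule.finrank_lt fun h => by simpa [K, hv] using h.ge (Submodule.mem_top (x := v))
    let A : K →ᵃ[ℝ] E := (AffineEquiv.constVAdd ℝ E b).toAffineMap.comp K.subtype.toAffineMap
    have hfb : Integrable (fun ω => f ω - b) μ := hf.sub (integrable_const b)
    have h0 := ih _ hK (f := fun ω => P (f ω - b)) (s := A ⁻¹' s) (P.integrable_comp hfb) ?_ rfl
    · rw [P.integral_comp_comm hfb, integral_sub hf (integrable_const b),
        integral_const, probReal_univ, one_smul, sub_self, map_zero] at h0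
      apply hb
      have hA0 := Set.mem_image_of_mem A h0
      rw [A.image_convexHull] at hA0
      refine convexHull_mono (Set.image_preimage_subset A s) ?_
      simpa [A] using hA0
    · filter_upwards [hfs, hLf] with ω hω hLω
      have hAP : A (P (f ω - b)) = b + (P (f ω - b) : E) := rfl
      rwa [Set.mem_preimage, hAP, hP _ (by simp [K, hLω]), add_sub_cancel]

theorem sigma_points_exist_general
    {Ω : Type*} [MeasurableSpace Ω] (μ : Measure Ω) [IsProbabilityMeasure μ]
    (m : ℕ) (g : Fin m → ℝ → ℝ)
    (X : Ω → ℝ)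
    (hint : ∀ k, Integrable (fun ω => g k (X ω)) μ) :
    ∃ (z : Fin (m + 1) → ℝ) (θ : Fin (m + 1) → ℝ),
      (∀ i, 0 ≤ θ i) ∧ (∑ i, θ i = 1) ∧
      ∀ k, ∫ ω, g k (X ω) ∂μ = ∑ i, θ i * g k (z i) := by
  let G : ℝ → Fin m → ℝ := fun x k => g k x
  have hmean : ∫ ω, G (X ω) ∂μ ∈ convexHull ℝ (Set.range G) :=
    integral_mem_convexHull (Integrable.of_eval hint) (ae_of_all _ fun ω => ⟨X ω, rfl⟩)
  obtain ⟨p, θ, hp, hθ, hθ1, hθp⟩ :=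
    exists_convex_combination_fin_of_mem_convexHull hmean (n := m + 1) (by simp)
  choose z hz using hp
  refine ⟨z, θ, hθ, hθ1, fun k => ?_⟩
  rw [← eval_integral hint k, ← hθp]
  simp [G, ← hz]

/-- Existence of sigma points matching `m` generalized moments. -/
theorem sigma_points_exist
    {Ω : Type*} [MeasurableSpace Ω] (μ : Measure Ω) [IsProbabilityMeasure μ]
    (m : ℕ) (g : Fin m → ℝ → ℝ) (hg : ∀ k, Continuous (g k))
    (X : Ω → ℝ) (hX : Measurable X)
    (hint : ∀ k, Integrable (fun ω => g k (X ω)) μ) :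
    ∃ (z : Fin (m + 1) → ℝ) (θ : Fin (m + 1) → ℝ),
      (∀ i, 0 ≤ θ i) ∧ (∑ i, θ i = 1) ∧
      ∀ k, ∫ ω, g k (X ω) ∂μ = ∑ i, θ i * g k (z i) :=
  sigma_points_exist_general μ m g X hint
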